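/- Let r, m, s be positive integers with m > r. Then in LCTR, SG(((r+1)ᵐ, rˢ)) = 0 if r + m is even, and SG(((r+1)ᵐ, rˢ)) = 1 if r + m is odd, where ((r+1)ᵐ, rˢ) is the partition with m parts equal to r+1 followed by s parts equal to r. -/

import Mathlib

/-- Remove the left column of a Young diagram: subtract 1 from each part and
omit nonpositive values. -/
def leftCol (l : List ℕ) : List ℕ := (l.map (· - 1)).filter (0 < ·)

/-- Remove the top row of a Young diagram. -/
def topRow (l : List ℕ) : List ℕ := l.tail

/-- Minimum excluded value of a set of naturals. -/
noncomputable def mex (s : Set ℕ) : ℕ := sInf {n | n ∉ s}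

def wt (l : List ℕ) : ℕ := l.sum + l.length

lemma wt_leftCol_le (l : List ℕ) : wt (leftCol l) ≤ l.sum := by
  induction l with
  | nil => simp [leftCol, wt]
  | cons a t ih =>
    simp only [leftCol, wt] at ih ⊢
    rw [List.map_cons, List.filter_cons]
    by_cases h : 0 < a - 1
    · simp only [h, decide_true, if_true, List.sum_cons, List.length_cons]
      omega
    · simp only [h, decide_false, Bool.false_eq_true, if_false, List.sum_cons]
      omega

lemma wt_leftCol_lt (l : List ℕ) (h : l ≠ []) : wt (leftCol l) < wt l := by
  have h1 := wt_leftCol_le l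
  have h2 : 0 < l.length := List.length_pos_iff.mpr h
  unfold wt at *
  omega

lemma wt_topRow_lt (l : List ℕ) (h : l ≠ []) : wt (topRow l) < wt l := by
  cases l with
  | nil => exact absurd rfl h
  | cons a t => simp [topRow, wt]; omega

/-- The Sprague–Grundy value of a position in the LCTR game. -/
noncomputable def SG (l : List ℕ) : ℕ :=
  if h : l = [] then 0
  else mex {SG (leftCol l), SG (topRow l)}
termination_by wt l
decreasing_by
  · exact wt_leftCol_lt l h
  · exact wt_topRow_lt l h

/-- A partition: a non-increasing list of positive integers. -/
def IsPartition (l : List ℕ) : Prop := l.Pairwise (· ≥ ·) ∧ ∀ x ∈ l, 0 < x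

/-- The conjugate partition: the `j`-th part (for `1 ≤ j ≤ l₁`) is the number
of parts of `l` that are at least `j`. -/
def conj (l : List ℕ) : List ℕ :=
  (List.range (l.headD 0)).map (fun j => l.countP (fun x => decide (j < x)))

/-!
Write `thick r m s` for `((r+1)ᵐ, rˢ)`. Removing the left column sends it to `thick (r-1) m s`
and removing the top row to `thick r (m-1) s`, so by induction on `r + m` both options have the
parity value opposite to `(r + m) % 2`, and the mex of a single value `v ∈ {0, 1}` is `1 - v`.
The induction only closes under the weaker invariant `r ≤ m + 1`, and has two kinds of edge:
* `r = 1`, where the left column leaves the column `1ᵐ`, whose value alternates `1, 2`;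
* `r = m + 1`, where the top row leaves the family; but the left column of that option is
  `thick (r-1) (m-1) s` of value `1`, so the option's value is not `1`, and the mex is `1`
  because the other option has value `0`. For `m = 1` the top row gives `2ˢ`, of value `0` or `2`.
-/

lemma SG_nil : SG [] = 0 := by
  rw [SG]; simp

lemma SG_of_ne_nil {l : List ℕ} (h : l ≠ []) :
    SG l = mex {SG (leftCol l), SG (topRow l)} := by
  rw [SG]; simp [h]

lemma mex_eq {S : Set ℕ} {n : ℕ} (hn : n ∉ S) (h : ∀ k < n, k ∈ S) : mex S = n :=
  le_antisymm (Nat.sInf_le hn) <| le_csInf ⟨n, hn⟩ fun k hk => by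
    by_contra! hkn
    exact hk (h k hkn)

lemma mex_pair_eq {a b n : ℕ} (ha : n ≠ a) (hb : n ≠ b) (h : ∀ k < n, k = a ∨ k = b) :
    mex {a, b} = n :=
  mex_eq (by simp [ha, hb]) h

lemma mex_pair_ne_left {a b : ℕ} : mex {a, b} ≠ a := by
  have hmem : mex {a, b} ∉ ({a, b} : Set ℕ) :=
    Nat.sInf_mem (s := {n | n ∉ ({a, b} : Set ℕ)}) ⟨a + b + 1, by
      simp only [Set.mem_ofPred_eq, Set.mem_insert_iff, Set.mem_singleton_iff]; omega⟩
  intro h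
  exact hmem (by rw [h]; exact Set.mem_insert a {b})

lemma leftCol_append (l l' : List ℕ) : leftCol (l ++ l') = leftCol l ++ leftCol l' := by
  simp [leftCol]

lemma leftCol_replicate_succ (k : ℕ) {x : ℕ} (hx : 0 < x) :
    leftCol (List.replicate k (x + 1)) = List.replicate k x := by
  simp [leftCol, hx]

lemma leftCol_replicate_one (k : ℕ) : leftCol (List.replicate k 1) = [] := by
  simp [leftCol]

lemma SG_replicate_one (k : ℕ) : SG (List.replicate (k + 1) 1) = k % 2 + 1 := by
  rw [SG_of_ne_nil (by simp), leftCol_replicate_one, SG_nil]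
  cases k with
  | zero =>
    change mex {0, SG []} = _
    rw [SG_nil]
    exact mex_pair_eq (by omega) (by omega) fun _ _ => by omega
  | succ k =>
    change mex {0, SG (List.replicate (k + 1) 1)} = _
    rw [SG_replicate_one k]
    exact mex_pair_eq (by omega) (by omega) fun _ _ => by omega

lemma SG_replicate_two (k : ℕ) : SG (List.replicate k 2) = 2 * (k % 2) := by
  cases k with
  | zero => exact SG_nil
  | succ k =>
    rw [SG_of_ne_nil (by simp), leftCol_replicate_succ _ one_pos]
    change mex {SG (List.replicate (k + 1) 1), SG (List.replicate k 2)} = _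
    rw [SG_replicate_one, SG_replicate_two k]
    exact mex_pair_eq (by omega) (by omega) fun _ _ => by omega

def thick (r m s : ℕ) : List ℕ := List.replicate m (r + 1) ++ List.replicate s r

lemma thick_ne_nil (r m s : ℕ) : thick r (m + 1) s ≠ [] := by
  simp [thick]

lemma topRow_thick (r m s : ℕ) : topRow (thick r (m + 1) s) = thick r m s := rfl

lemma topRow_thick_one (r s : ℕ) : topRow (thick r 1 s) = List.replicate s r := rfl

lemma leftCol_thick (r m s : ℕ) : leftCol (thick (r + 2) m s) = thick (r + 1) m s := by
  simp only [thick, leftCol_append]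
  rw [leftCol_replicate_succ _ (by omega), leftCol_replicate_succ _ (by omega)]

lemma leftCol_thick_one (m s : ℕ) : leftCol (thick 1 m s) = List.replicate m 1 := by
  rw [thick, leftCol_append, leftCol_replicate_succ _ one_pos, leftCol_replicate_one,
    List.append_nil]

theorem SG_thick {s : ℕ} (hs : 0 < s) :
    ∀ {r m : ℕ}, 0 < r → 0 < m → r ≤ m + 1 → SG (thick r m s) = (r + m) % 2
  | 1, 1, _, _, _ => by
    obtain ⟨s, rfl⟩ := Nat.exists_eq_add_one.mpr hs
    rw [SG_of_ne_nil (thick_ne_nil _ _ _), leftCol_thick_one, topRow_thick_one,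
      SG_replicate_one, SG_replicate_one]
    exact mex_pair_eq (by omega) (by omega) fun _ _ => by omega
  | 1, m + 2, _, _, _ => by
    rw [SG_of_ne_nil (thick_ne_nil _ _ _), leftCol_thick_one, topRow_thick,
      SG_replicate_one, SG_thick hs (r := 1) (m := m + 1) one_pos (by omega) (by omega)]
    exact mex_pair_eq (by omega) (by omega) fun _ _ => by omega
  | 2, 1, _, _, _ => by
    rw [SG_of_ne_nil (thick_ne_nil _ _ _), leftCol_thick, topRow_thick_one,
      SG_replicate_two, SG_thick hs (r := 1) (m := 1) one_pos one_pos (by omega)]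
    exact mex_pair_eq (by omega) (by omega) fun _ _ => by omega
  | r + 2, m + 2, _, _, hrm => by
    rw [SG_of_ne_nil (thick_ne_nil _ _ _), leftCol_thick, topRow_thick,
      SG_thick hs (r := r + 1) (m := m + 2) (by omega) (by omega) (by omega)]
    rcases Nat.lt_or_ge (m + 2) (r + 2) with hboundary | hinterior
    · have hT : SG (thick (r + 2) (m + 1) s) ≠ 1 := by
        rw [SG_of_ne_nil (thick_ne_nil _ _ _), leftCol_thick,
          SG_thick hs (r := r + 1) (m := m + 1) (by omega) (by omega) (by omega),
          show (r + 1 + (m + 1)) % 2 = 1 by omega]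
        exact mex_pair_ne_left
      exact mex_pair_eq (by omega) (by omega) fun _ _ => by omega
    · rw [SG_thick hs (r := r + 2) (m := m + 1) (by omega) (by omega) hinterior]
      exact mex_pair_eq (by omega) (by omega) fun _ _ => by omega
  | 0, _, hr, _, _ | _, 0, _, hm, _ | _ + 3, 1, _, _, hrm => by omega
termination_by r m => r + m

/-- For positive integers `r, m, s` with `m > r`, the partition
`((r+1)ᵐ, rˢ)` has Sprague–Grundy value 0 if `r + m` is even and 1 if `r + m`
is odd. -/
theorem SG_thick_gamma_one (r m s : ℕ) (hr : 0 < r) (hs : 0 < s) (hm : r < m) :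
    (Even (r + m) → SG (List.replicate m (r + 1) ++ List.replicate s r) = 0) ∧
    (Odd (r + m) → SG (List.replicate m (r + 1) ++ List.replicate s r) = 1) := by
  have h : SG (thick r m s) = (r + m) % 2 := SG_thick hs hr (by omega) (by omega)
  exact ⟨fun he => h.trans (Nat.even_iff.mp he), fun ho => h.trans (Nat.odd_iff.mp ho)⟩
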